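/- Let L be a Lie algebra over a field F of characteristic 0, T ∈ L, and let Δ₀ be the standard coproduct on the universal enveloping algebra U(L) (so Δ₀(T) = T⊗1 + 1⊗T). Then for every a ∈ F and nonnegative integer m, Δ₀(T^[m]) = Σ_{i=0}^{m} C(m,i) T_{−a}^[i] ⊗ T_a^[m−i], where T_a^[k] = (T+a)(T+a−1)···(T+a−k+1) and T^[m] = T_0^[m]. -/

import Mathlib

/-!
`T^[m]` is the Pochhammer polynomial `X (X - 1) ⋯ (X - m + 1)` evaluated at `T`, and `T_a^[m]` is
the same polynomial evaluated at `T + a`. Since `Δ₀` is an algebra map it sends `T^[m]` to the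
Pochhammer polynomial evaluated at `Δ₀ T = (T + (-a)) ⊗ 1 + 1 ⊗ (T + a)`, a sum of two commuting
elements, and the Chu–Vandermonde identity for such sums expands it into the stated tensors.
-/

open scoped TensorProduct
open UniversalEnvelopingAlgebra

/-- Falling factorial `T_a^[k] = (T+a)(T+a−1)⋯(T+a−k+1)` in an `F`-algebra. -/
noncomputable def fall {F A : Type*} [Field F] [Ring A] [Algebra F A]
    (x : A) (a : F) : ℕ → A
  | 0 => 1
  | n + 1 => fall x a n * (x + algebraMap F A (a - n))

open Polynomial Finset

section Fall

variable {F A B : Type*} [Field F] [Ring A] [Algebra F A] [Ring B] [Algebra F B]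

theorem fall_eq_smeval_descPochhammer (x : A) (a : F) (n : ℕ) :
    fall x a n = (descPochhammer ℤ n).smeval (x + algebraMap F A a) := by
  induction n with
  | zero => simp [fall]
  | succ n ih =>
    rw [fall, ih, descPochhammer_succ_right, smeval_mul, smeval_sub, smeval_X, smeval_natCast,
      map_sub, map_natCast]
    simp only [pow_one, pow_zero, nsmul_eq_mul, mul_one]
    abel_nf

theorem AlgHom.map_fall (f : A →ₐ[F] B) (x : A) (a : F) (n : ℕ) :
    f (fall x a n) = fall (f x) a n := by
  induction n with
  | zero => simp [fall]
  | succ n ih => simp [fall, ih]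

theorem Commute.fall_add {y z : A} (h : Commute y z) (b c : F) (m : ℕ) :
    fall (y + z) (b + c) m
      = ∑ i ∈ range (m + 1), m.choose i • (fall y b i * fall z c (m - i)) := by
  have hyz : Commute (y + algebraMap F A b) (z + algebraMap F A c) :=
    (h.add_right (Algebra.commute_algebraMap_right c y)).add_left
      (Algebra.commute_algebraMap_left b _)
  rw [fall_eq_smeval_descPochhammer, map_add, add_add_add_comm,
    Ring.descPochhammer_smeval_add m hyz, Nat.sum_antidiagonal_eq_sum_range_succ_mk]
  simp only [fall_eq_smeval_descPochhammer, nsmul_eq_mul]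

theorem fall_tmul_one (x : A) (a : F) (n : ℕ) :
    fall (x ⊗ₜ[F] (1 : B)) a n = fall x a n ⊗ₜ[F] 1 :=
  ((Algebra.TensorProduct.includeLeft (S := F) (B := B)).map_fall x a n).symm

theorem fall_one_tmul (x : B) (a : F) (n : ℕ) :
    fall ((1 : A) ⊗ₜ[F] x) a n = 1 ⊗ₜ[F] fall x a n :=
  ((Algebra.TensorProduct.includeRight (A := A)).map_fall x a n).symm

end Fall

theorem coprod_fall_general {F L : Type*} [Field F] [LieRing L] [LieAlgebra F L]
    (T : L)
    (Δ₀ : UniversalEnvelopingAlgebra F L →ₐ[F]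
      (UniversalEnvelopingAlgebra F L ⊗[F] UniversalEnvelopingAlgebra F L))
    (hΔ : ∀ x : L, Δ₀ (ι F x) = ι F x ⊗ₜ[F] 1 + 1 ⊗ₜ[F] ι F x)
    (a : F) (m : ℕ) :
    Δ₀ (fall (ι F T) (0 : F) m)
      = ∑ i ∈ Finset.range (m + 1),
          (m.choose i) • (fall (ι F T) (-a) i ⊗ₜ[F] fall (ι F T) a (m - i)) := by
  have hcomm : Commute (ι F T ⊗ₜ[F] (1 : UniversalEnvelopingAlgebra F L))
      ((1 : UniversalEnvelopingAlgebra F L) ⊗ₜ[F] ι F T) := by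
    simp [Commute, SemiconjBy]
  rw [Δ₀.map_fall, hΔ, ← neg_add_cancel a, hcomm.fall_add]
  simp only [fall_tmul_one, fall_one_tmul, Algebra.TensorProduct.tmul_mul_tmul, mul_one, one_mul]

theorem coprod_fall {F L : Type*} [Field F] [CharZero F] [LieRing L] [LieAlgebra F L]
    (T : L)
    (Δ₀ : UniversalEnvelopingAlgebra F L →ₐ[F]
      (UniversalEnvelopingAlgebra F L ⊗[F] UniversalEnvelopingAlgebra F L))
    (hΔ : ∀ x : L, Δ₀ (ι F x) = ι F x ⊗ₜ[F] 1 + 1 ⊗ₜ[F] ι F x)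
    (a : F) (m : ℕ) :
    Δ₀ (fall (ι F T) (0 : F) m)
      = ∑ i ∈ Finset.range (m + 1),
          (m.choose i) • (fall (ι F T) (-a) i ⊗ₜ[F] fall (ι F T) a (m - i)) :=
  coprod_fall_general T Δ₀ hΔ a m
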